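/- With Δ(β,J_A) = e_A(β,J_A) + J_A tanh(βJ_A) and J_A ≠ 0, the quantities Δ(β,J_A) and Δ(β,−J_A) have opposite signs (their product is ≤ 0), and Δ(β,J_A) = 0 if and only if Δ(β,−J_A) = 0. -/

import Mathlib

open Finset Real

/-- Spin value of a Boolean spin variable: `true ↦ 1`, `false ↦ -1`. -/
def spin (b : Bool) : ℝ := if b then 1 else -1

/-- Energy of a finite Ising system: `H(S) = -∑_{A ⊆ V} J_A ∏_{i ∈ A} S_i`. -/
noncomputable def energy {V : Type*} [Fintype V] [DecidableEq V]
    (J : Finset V → ℝ) (S : V → Bool) : ℝ :=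
  -∑ A : Finset V, J A * ∏ i ∈ A, spin (S i)

/-- Partition function `Z(β, J) = ∑_S exp (-β H(S))`. -/
noncomputable def Z {V : Type*} [Fintype V] [DecidableEq V]
    (β : ℝ) (J : Finset V → ℝ) : ℝ :=
  ∑ S : V → Bool, Real.exp (-β * energy J S)

/-- Thermal average `⟨f⟩_β = Z⁻¹ ∑_S f(S) exp (-β H(S))`. -/
noncomputable def texp {V : Type*} [Fintype V] [DecidableEq V]
    (β : ℝ) (J : Finset V → ℝ) (f : (V → Bool) → ℝ) : ℝ :=
  (∑ S : V → Bool, f S * Real.exp (-β * energy J S)) / Z β J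

/-- Thermal average of the local energy of subset `A`:
`e_A(β, J_A) = -⟨J_A ∏_{i ∈ A} S_i⟩_β`. -/
noncomputable def eA {V : Type*} [Fintype V] [DecidableEq V]
    (β : ℝ) (J : Finset V → ℝ) (A : Finset V) : ℝ :=
  texp β J (fun S => -(J A * ∏ i ∈ A, spin (S i)))

/-- Deviation of the local energy from its isolated value:
`Δ(β, J_A) = e_A(β, J_A) + J_A tanh (β J_A)`. -/
noncomputable def Δ {V : Type*} [Fintype V] [DecidableEq V]
    (β : ℝ) (J : Finset V → ℝ) (A : Finset V) : ℝ :=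
  eA β J A + J A * Real.tanh (β * J A)

/-- Couplings with the single coupling `J_A` negated. -/
noncomputable def flipJ {V : Type*} [DecidableEq V]
    (J : Finset V → ℝ) (A : Finset V) : Finset V → ℝ :=
  Function.update J A (-(J A))

/-!
Splitting off the coupling `J_A = a`: since `σ_A = ∏_{i ∈ A} S_i = ±1`, the Boltzmann factor
`exp (β a σ_A)` equals `cosh (β a) + σ_A sinh (β a)`. Hence the partition function and the
unnormalised correlation `∑_S σ_A e^{-βH}` of the system are linear combinations, with
coefficients `cosh (β a)` and `sinh (β a)`, of the same two quantities `Z₀`, `C₀` of the system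
with `J_A = 0`. Substituting into `Δ` gives `Δ(β, a) = -a C₀ / (cosh (β a) Z(β, a))`, whose sign
is that of `-a C₀`, an odd function of `a`.
-/

lemma exp_mul_eq_cosh_add_mul_sinh {s : ℝ} (hs : s * s = 1) (x : ℝ) :
    exp (x * s) = cosh x + s * sinh x := by
  rcases mul_self_eq_one_iff.mp hs with rfl | rfl
  · rw [mul_one, one_mul, cosh_add_sinh]
  · rw [mul_neg_one, neg_one_mul, ← cosh_sub_sinh]
    ring

lemma spin_mul_self (b : Bool) : spin b * spin b = 1 := by
  cases b <;> simp [spin]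

lemma prod_spin_mul_self {V : Type*} (A : Finset V) (S : V → Bool) :
    (∏ i ∈ A, spin (S i)) * ∏ i ∈ A, spin (S i) = 1 := by
  rw [← prod_mul_distrib]
  exact prod_eq_one fun i _ => spin_mul_self (S i)

section

variable {V : Type*} [Fintype V] [DecidableEq V]

noncomputable def corrSum (β : ℝ) (J : Finset V → ℝ) (A : Finset V) : ℝ :=
  ∑ S : V → Bool, (∏ i ∈ A, spin (S i)) * exp (-β * energy J S)

lemma Z_pos (β : ℝ) (J : Finset V → ℝ) : 0 < Z β J :=
  sum_pos (fun _ _ => exp_pos _) univ_nonempty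

lemma eA_eq (β : ℝ) (J : Finset V → ℝ) (A : Finset V) :
    eA β J A = -(J A * corrSum β J A) / Z β J := by
  simp only [eA, texp, corrSum, mul_sum, ← sum_neg_distrib, neg_mul, mul_assoc]

lemma energy_update (J : Finset V → ℝ) (A : Finset V) (a : ℝ) (S : V → Bool) :
    energy (Function.update J A a) S
      = energy (Function.update J A 0) S - a * ∏ i ∈ A, spin (S i) := by
  simp only [energy, ← add_sum_erase _ _ (mem_univ A), Function.update_self]
  rw [sum_congr rfl fun B hB => by
    rw [Function.update_of_ne (ne_of_mem_erase hB),
      ← Function.update_of_ne (ne_of_mem_erase hB) (0 : ℝ) J]]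
  ring

lemma exp_energy_update (β : ℝ) (J : Finset V → ℝ) (A : Finset V) (a : ℝ) (S : V → Bool) :
    exp (-β * energy (Function.update J A a) S)
      = (cosh (β * a) + (∏ i ∈ A, spin (S i)) * sinh (β * a)) *
        exp (-β * energy (Function.update J A 0) S) := by
  rw [energy_update, ← exp_mul_eq_cosh_add_mul_sinh (prod_spin_mul_self A S), ← exp_add]
  ring_nf

lemma Z_update (β : ℝ) (J : Finset V → ℝ) (A : Finset V) (a : ℝ) :
    Z β (Function.update J A a)
      = cosh (β * a) * Z β (Function.update J A 0)
        + sinh (β * a) * corrSum β (Function.update J A 0) A := by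
  simp only [Z, corrSum, exp_energy_update β J A a, mul_sum, ← sum_add_distrib]
  exact sum_congr rfl fun S _ => by ring

lemma corrSum_update (β : ℝ) (J : Finset V → ℝ) (A : Finset V) (a : ℝ) :
    corrSum β (Function.update J A a) A
      = cosh (β * a) * corrSum β (Function.update J A 0) A
        + sinh (β * a) * Z β (Function.update J A 0) := by
  simp only [Z, corrSum, exp_energy_update β J A a, mul_sum, ← sum_add_distrib]
  refine sum_congr rfl fun S _ => ?_
  linear_combination (sinh (β * a) * exp (-β * energy (Function.update J A 0) S)) *
    prod_spin_mul_self A S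

lemma Δ_update (β : ℝ) (J : Finset V → ℝ) (A : Finset V) (a : ℝ) :
    Δ β (Function.update J A a) A
      = -(a * corrSum β (Function.update J A 0) A) /
          (cosh (β * a) * Z β (Function.update J A a)) := by
  have hc : 0 < cosh (β * a) := cosh_pos _
  have hZ := Z_pos β (Function.update J A a)
  rw [Δ, eA_eq, Function.update_self, corrSum_update β J A a, tanh_eq_sinh_div_cosh,
    mul_div_assoc', div_add_div _ _ hZ.ne' hc.ne', div_eq_div_iff (by positivity) (by positivity),
    Z_update β J A a]
  linear_combination (-(a * corrSum β (Function.update J A 0) A * cosh (β * a) *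
    (cosh (β * a) * Z β (Function.update J A 0)
      + sinh (β * a) * corrSum β (Function.update J A 0) A))) * cosh_sq_sub_sinh_sq (β * a)

end

theorem Delta_opposite_signs_general {V : Type*} [Fintype V] [DecidableEq V]
    (β : ℝ) (J : Finset V → ℝ) (A : Finset V) :
    Δ β J A * Δ β (flipJ J A) A ≤ 0 ∧
    (Δ β J A = 0 ↔ Δ β (flipJ J A) A = 0) := by
  set c := corrSum β (Function.update J A 0) A
  have hd : 0 < cosh (β * J A) * Z β J := mul_pos (cosh_pos _) (Z_pos β J)
  have hd' : 0 < cosh (β * J A) * Z β (flipJ J A) := mul_pos (cosh_pos _) (Z_pos β _)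
  have hΔ : Δ β J A = -(J A * c) / (cosh (β * J A) * Z β J) := by
    simpa only [Function.update_eq_self] using Δ_update β J A (J A)
  have hΔ' : Δ β (flipJ J A) A = J A * c / (cosh (β * J A) * Z β (flipJ J A)) := by
    simpa only [flipJ, mul_neg, cosh_neg, neg_mul, neg_neg] using Δ_update β J A (-J A)
  rw [hΔ, hΔ', div_eq_zero_iff, div_eq_zero_iff, neg_eq_zero, div_mul_div_comm, neg_mul]
  refine ⟨div_nonpos_of_nonpos_of_nonneg (neg_nonpos.mpr (mul_self_nonneg _)) (by positivity), ?_⟩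
  simp only [hd.ne', hd'.ne', or_false]

/-- `Δ(β,J_A)` and `Δ(β,-J_A)` have opposite signs, and one
vanishes iff the other does. -/
theorem Delta_opposite_signs {V : Type*} [Fintype V] [DecidableEq V]
    (β : ℝ) (J : Finset V → ℝ) (A : Finset V) (hJ : J A ≠ 0) :
    Δ β J A * Δ β (flipJ J A) A ≤ 0 ∧
    (Δ β J A = 0 ↔ Δ β (flipJ J A) A = 0) :=
  Delta_opposite_signs_general β J A
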